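/- Let R be a commutative unital ring that is torsion-free as a module over ℤ, and let δ : R → R be a derivation. Then the differential polynomial ring R[x;id_R,δ] is a simple ring if and only if R is δ-simple and δ is non-zero. -/

import Mathlib

/-- `δ` is a `σ`-derivation of `R`: it is additive and satisfies the twisted Leibniz rule
`δ(ab) = σ(a)δ(b) + δ(a)b`. -/
def IsSigmaDerivation {R : Type*} [Ring R] (σ : R →+* R) (δ : R → R) : Prop :=
  (∀ a b : R, δ (a + b) = δ a + δ b) ∧ ∀ a b : R, δ (a * b) = σ a * δ b + δ a * b

/-- `S`, together with the ring morphism `f : R →+* S` and the element `x : S`, is an Ore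
extension `R[x;σ,δ]`: the powers `1, x, x², …` form a basis of `S` as a left `R`-module
(i.e. every element of `S` is, in a unique way, a finite sum `Σᵢ f(aᵢ) xⁱ`), and the
commutation rule `x·r = σ(r)·x + δ(r)` holds for all `r ∈ R`. -/
structure IsOreExtension {R S : Type*} [Ring R] [Ring S]
    (σ : R →+* R) (δ : R → R) (f : R →+* S) (x : S) : Prop where
  basis : Function.Bijective fun a : ℕ →₀ R => a.sum fun i r => f r * x ^ i
  rel : ∀ r : R, x * f r = f (σ r) * x + f (δ r)

/-- `R` is `σ`-`δ`-simple: the only two-sided ideals `J` of `R` with `σ(J) ⊆ J` and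
`δ(J) ⊆ J` are `{0}` and `R`. -/
def IsSigmaDeltaSimple {R : Type*} [Ring R] (σ : R →+* R) (δ : R → R) : Prop :=
  ∀ J : TwoSidedIdeal R, (∀ a ∈ J, σ a ∈ J) → (∀ a ∈ J, δ a ∈ J) → J = ⊥ ∨ J = ⊤

/-- `R` is `δ`-simple: the only two-sided ideals `J` of `R` with `δ(J) ⊆ J` are `{0}`
and `R`. -/
def IsDeltaSimple {R : Type*} [Ring R] (δ : R → R) : Prop :=
  ∀ J : TwoSidedIdeal R, (∀ a ∈ J, δ a ∈ J) → J = ⊥ ∨ J = ⊤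

/-
Every element of `S` is uniquely a sum `Σ f(aᵢ) xⁱ`, so `S` is additively isomorphic to `R[X]`
through `eval₂ f x`, and `x s - s x` has coefficients `δ(aᵢ)`.

If `S` is simple, then `δ ≠ 0`, since otherwise `x` would be a nonzero central element, hence
invertible, while `s x` never equals `1`. A `δ`-invariant ideal `J` of `R` gives the ideal of
elements of `S` with all coefficients in `J`, which meets `f(R)` in `f(J)`.

Conversely, let `I ≠ 0` be an ideal of `S` and `n` the least degree of its nonzero elements.
The coefficients of degree `n` of the elements of `I` of degree `≤ n` form a nonzero `δ`-invariant
ideal, so some `p ∈ I` has degree `n` and leading coefficient `1`. If `n > 0`, then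
`p f(r) - f(r) p ∈ I` has degree `< n` and coefficient `n • δ(r)` in degree `n - 1`; by
minimality it vanishes, and torsion-freeness gives `δ = 0`. Hence `n = 0` and `p = 1`.
-/

open Polynomial

namespace IsOreExtension

section Ring

variable {R S : Type*} [Ring R] [Ring S] {f : R →+* S} {x : S}

section General

variable {σ : R →+* R} {δ : R → R}

theorem bijective_eval₂ (h : IsOreExtension σ δ f x) : Function.Bijective (eval₂ f x) := by
  have : eval₂ f x = (fun a : ℕ →₀ R => a.sum fun i r => f r * x ^ i) ∘
      ((toFinsuppIso R).toEquiv.trans AddMonoidAlgebra.coeffEquiv) := by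
    ext ⟨⟨a⟩⟩
    simp [eval₂_eq_sum, Polynomial.sum_def, Finsupp.sum, AddMonoidAlgebra.coeffEquiv]
  rw [this]
  exact h.basis.comp (Equiv.bijective _)

noncomputable def repr (h : IsOreExtension σ δ f x) : S ≃+ R[X] :=
  (AddEquiv.ofBijective (eval₂AddMonoidHom f x) h.bijective_eval₂).symm

variable (h : IsOreExtension σ δ f x)

theorem repr_eq_iff {s : S} {p : R[X]} : h.repr s = p ↔ s = eval₂ f x p :=
  AddEquiv.symm_apply_eq _

@[simp]
theorem repr_eval₂ (p : R[X]) : h.repr (eval₂ f x p) = p :=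
  h.repr_eq_iff.2 rfl

@[simp]
theorem eval₂_repr (s : S) : eval₂ f x (h.repr s) = s :=
  (h.repr_eq_iff.1 rfl).symm

theorem repr_f_mul (r : R) (s : S) : h.repr (f r * s) = C r * h.repr s :=
  h.repr_eq_iff.2 <| by rw [← smul_eq_C_mul, eval₂_smul, eval₂_repr]

theorem repr_mul_x (s : S) : h.repr (s * x) = h.repr s * X :=
  h.repr_eq_iff.2 <| by rw [eval₂_mul_X, eval₂_repr]

@[simp]
theorem repr_f (r : R) : h.repr (f r) = C r :=
  h.repr_eq_iff.2 (eval₂_C f x).symm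

@[simp]
theorem repr_one : h.repr 1 = 1 := by
  simpa using h.repr_f 1

theorem injective_f (h : IsOreExtension σ δ f x) : Function.Injective f := fun a b hab =>
  C_injective (by simpa using congrArg h.repr hab)

@[simp]
theorem repr_x : h.repr x = X := by
  simpa using h.repr_mul_x 1

theorem mul_mem_of_f_mul_mem_of_x_mul_mem (h : IsOreExtension σ δ f x) {T : AddSubgroup S}
    (hf : ∀ r, ∀ s ∈ T, f r * s ∈ T) (hx : ∀ s ∈ T, x * s ∈ T) (u : S) {s : S} (hs : s ∈ T) :
    u * s ∈ T := by
  obtain ⟨p, rfl⟩ := h.bijective_eval₂.2 u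
  induction p using Polynomial.induction_on' with
  | add p q hp hq => rw [eval₂_add, add_mul]; exact T.add_mem hp hq
  | monomial n a =>
    rw [eval₂_monomial, mul_assoc]
    refine hf a _ ?_
    induction n with
    | zero => simpa
    | succ n ih => rw [pow_succ', mul_assoc]; exact hx _ ih

theorem mul_x_ne_one [Nontrivial R] (h : IsOreExtension σ δ f x) (s : S) : s * x ≠ 1 := by
  intro hs
  simpa [repr_mul_x] using congrArg (fun t => (h.repr t).coeff 0) hs

end General

section Derivation

variable {δ : R →+ R}

theorem x_mul_f (h : IsOreExtension (RingHom.id R) δ f x) (r : R) :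
    x * f r = f r * x + f (δ r) :=
  h.rel r

variable (h : IsOreExtension (RingHom.id R) δ f x)

theorem coeff_repr_x_mul_sub_mul_x (s : S) (n : ℕ) :
    (h.repr (x * s - s * x)).coeff n = δ ((h.repr s).coeff n) := by
  obtain ⟨p, rfl⟩ := h.bijective_eval₂.2 s
  rw [repr_eval₂]
  induction p using Polynomial.induction_on' generalizing n with
  | add p q hp hq =>
    rw [eval₂_add, mul_add, add_mul, add_sub_add_comm, map_add, coeff_add, hp, hq, coeff_add,
      map_add]
  | monomial k a =>
    have : x * (f a * x ^ k) - f a * x ^ k * x = eval₂ f x (monomial k (δ a)) := by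
      rw [eval₂_monomial, ← mul_assoc, h.x_mul_f, add_mul, mul_assoc, ← pow_succ', pow_succ]
      noncomm_ring
    rw [eval₂_monomial, this, repr_eval₂, coeff_monomial, coeff_monomial]
    split_ifs <;> simp

theorem exists_pow_succ_mul_f_sub (h : IsOreExtension (RingHom.id R) δ f x) (n : ℕ) (r : R) :
    ∃ d : R[X], x ^ (n + 1) * f r - f r * x ^ (n + 1) = eval₂ f x d ∧ d.natDegree ≤ n ∧
      d.coeff n = (n + 1) • δ r := by
  induction n generalizing r with
  | zero => exact ⟨C (δ r), by simp [h.x_mul_f], by simp, by simp⟩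
  | succ n ih =>
    obtain ⟨d, hd, hdeg, hcoeff⟩ := ih r
    obtain ⟨d', hd', hdeg', -⟩ := ih (δ r)
    refine ⟨d * X + monomial (n + 1) (δ r) + d', ?_, ?_, ?_⟩
    · calc x ^ (n + 1 + 1) * f r - f r * x ^ (n + 1 + 1)
          = (x ^ (n + 1) * f r - f r * x ^ (n + 1)) * x + f (δ r) * x ^ (n + 1)
            + (x ^ (n + 1) * f (δ r) - f (δ r) * x ^ (n + 1)) := by
            rw [pow_succ x (n + 1), ← mul_assoc, mul_assoc _ x, h.x_mul_f]; noncomm_ring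
        _ = _ := by rw [hd, hd', eval₂_add, eval₂_add, eval₂_mul_X, eval₂_monomial]
    · refine natDegree_add_le_of_degree_le (natDegree_add_le_of_degree_le ?_
        (natDegree_monomial_le _)) (hdeg'.trans n.le_succ)
      exact natDegree_mul_le.trans (add_le_add hdeg natDegree_X_le)
    · rw [coeff_add, coeff_add, coeff_mul_X, hcoeff, coeff_monomial, if_pos rfl,
        coeff_eq_zero_of_natDegree_lt (hdeg'.trans_lt n.lt_succ_self), add_zero,
        succ_nsmul _ (n + 1)]

end Derivation

end Ring

section CommRing

variable {R S : Type*} [CommRing R] [Ring S] {f : R →+* S} {x : S} {δ : R →+ R}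
  (h : IsOreExtension (RingHom.id R) δ f x)

theorem exists_mul_f_sub_of_natDegree_le {n : ℕ} {s : S} (hs : (h.repr s).natDegree ≤ n + 1)
    (r : R) : ∃ d : R[X], s * f r - f r * s = eval₂ f x d ∧ d.natDegree ≤ n ∧
      d.coeff n = (n + 1) • ((h.repr s).coeff (n + 1) * δ r) := by
  rw [← h.eval₂_repr s, repr_eval₂]
  refine induction_with_natDegree_le (motive := fun p => ∃ d : R[X],
    eval₂ f x p * f r - f r * eval₂ f x p = eval₂ f x d ∧ d.natDegree ≤ n ∧
      d.coeff n = (n + 1) • (p.coeff (n + 1) * δ r)) (n + 1) ?_ ?_ ?_ _ hs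
  · exact ⟨0, by simp, by simp, by simp⟩
  · intro k a _ hk
    have hcomm : f r * f a = f a * f r := by rw [← map_mul, mul_comm, map_mul]
    rw [C_mul_X_pow_eq_monomial, eval₂_monomial, coeff_monomial]
    cases k with
    | zero => exact ⟨0, by simp [hcomm], by simp, by simp⟩
    | succ j =>
      obtain ⟨d, hd, hdeg, hcoeff⟩ := h.exists_pow_succ_mul_f_sub j r
      refine ⟨C a * d, ?_, (natDegree_C_mul_le a d).trans (by omega), ?_⟩
      · rw [← smul_eq_C_mul, eval₂_smul, ← hd]
        simp only [mul_sub, ← mul_assoc, hcomm]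
      · rcases (show j ≤ n by omega).eq_or_lt with rfl | hjn
        · rw [coeff_C_mul, hcoeff, if_pos rfl, mul_smul_comm]
        · rw [coeff_C_mul, coeff_eq_zero_of_natDegree_lt (hdeg.trans_lt hjn), if_neg (by omega)]
          simp
  · intro p q _ _ hp hq
    obtain ⟨d, hd, hdeg, hcoeff⟩ := hp
    obtain ⟨d', hd', hdeg', hcoeff'⟩ := hq
    refine ⟨d + d', ?_, natDegree_add_le_of_degree_le hdeg hdeg', ?_⟩
    · rw [eval₂_add, eval₂_add, ← hd, ← hd']; noncomm_ring
    · rw [coeff_add, coeff_add, hcoeff, hcoeff', add_mul, smul_add]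

variable {J : TwoSidedIdeal R} (hJ : ∀ a ∈ J, δ a ∈ J)

noncomputable def extendIdeal : TwoSidedIdeal S :=
  let T := (J.asIdeal.map C).toAddSubgroup.comap h.repr.toAddMonoidHom
  have mem_T {s : S} : s ∈ T ↔ ∀ n, (h.repr s).coeff n ∈ J := by
    simp [T, Ideal.mem_map_C_iff]
  TwoSidedIdeal.mk' T T.zero_mem T.add_mem T.neg_mem
    (h.mul_mem_of_f_mul_mem_of_x_mul_mem
      (fun r s hs => mem_T.2 fun n => by
        rw [repr_f_mul, coeff_C_mul]; exact J.mul_mem_left _ _ (mem_T.1 hs n))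
      (fun s hs => by
        rw [← add_sub_cancel (s * x) (x * s)]
        refine T.add_mem ?_ (mem_T.2 fun n => ?_)
        · show h.repr (s * x) ∈ J.asIdeal.map C
          rw [repr_mul_x]; exact Ideal.mul_mem_right _ _ hs
        · rw [coeff_repr_x_mul_sub_mul_x]; exact hJ _ (mem_T.1 hs n)) _)
    (fun {s} u hs => by
      show h.repr (s * u) ∈ J.asIdeal.map C
      rw [← h.eval₂_repr s, eval₂_eq_sum, Polynomial.sum_def, Finset.sum_mul, map_sum]
      refine sum_mem fun n _ => ?_
      rw [mul_assoc, repr_f_mul]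
      exact Ideal.mul_mem_right _ _ (Ideal.mem_map_of_mem C (mem_T.1 hs n)))

theorem mem_extendIdeal {s : S} : s ∈ h.extendIdeal hJ ↔ ∀ n, (h.repr s).coeff n ∈ J := by
  simp [extendIdeal, TwoSidedIdeal.mem_mk', Ideal.mem_map_C_iff]

theorem f_mem_extendIdeal_iff {a : R} : f a ∈ h.extendIdeal hJ ↔ a ∈ J := by
  simp only [mem_extendIdeal, repr_f, coeff_C]
  exact ⟨fun ha => by simpa using ha 0, fun ha n => by split_ifs <;> simp [ha, J.zero_mem]⟩

theorem isDeltaSimple_of_isSimpleRing (h : IsOreExtension (RingHom.id R) δ f x)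
    [IsSimpleRing S] : IsDeltaSimple δ := by
  intro J hJ
  refine (eq_bot_or_eq_top (h.extendIdeal hJ)).imp (fun hbot => ?_) (fun htop => ?_)
  · ext a
    rw [← h.f_mem_extendIdeal_iff hJ, hbot, TwoSidedIdeal.mem_bot, TwoSidedIdeal.mem_bot,
      ← map_zero f]
    exact h.injective_f.eq_iff
  · rw [← J.one_mem_iff, ← h.f_mem_extendIdeal_iff hJ, map_one, htop]
    trivial

theorem ne_zero_of_isSimpleRing (h : IsOreExtension (RingHom.id R) δ f x) [IsSimpleRing S] :
    δ ≠ 0 := by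
  rintro rfl
  have : Nontrivial R := f.domain_nontrivial
  have hx : x ∈ Subring.center S := Subring.mem_center_iff.2 fun s => by
    rw [eq_comm, ← sub_eq_zero, ← h.repr.map_eq_zero_iff]
    ext n
    rw [h.coeff_repr_x_mul_sub_mul_x, AddMonoidHom.zero_apply, coeff_zero]
  have hx0 : (⟨x, hx⟩ : Subring.center S) ≠ 0 := fun h0 => by
    simpa using congrArg (h.repr ∘ Subtype.val) h0
  obtain ⟨y, hy⟩ := (IsSimpleRing.isField_center S).mul_inv_cancel hx0
  refine h.mul_x_ne_one y ?_
  rw [Subring.mem_center_iff.1 hx]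
  exact congrArg Subtype.val hy

noncomputable def leadingCoeffIdeal (I : TwoSidedIdeal S) (n : ℕ) : TwoSidedIdeal R :=
  TwoSidedIdeal.mk' {r | ∃ s ∈ I, (h.repr s).natDegree ≤ n ∧ (h.repr s).coeff n = r}
    ⟨0, I.zero_mem, by simp, by simp⟩
    (by
      rintro _ _ ⟨s, hs, hsn, rfl⟩ ⟨t, ht, htn, rfl⟩
      refine ⟨s + t, I.add_mem hs ht, ?_, by simp⟩
      rw [map_add]; exact natDegree_add_le_of_degree_le hsn htn)
    (by rintro _ ⟨s, hs, hsn, rfl⟩; exact ⟨-s, I.neg_mem hs, by simpa using hsn, by simp⟩)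
    (by
      rintro a _ ⟨s, hs, hsn, rfl⟩
      refine ⟨f a * s, I.mul_mem_left _ _ hs, ?_, by rw [repr_f_mul, coeff_C_mul]⟩
      rw [repr_f_mul]; exact (natDegree_C_mul_le _ _).trans hsn)
    (by
      rintro _ a ⟨s, hs, hsn, rfl⟩
      refine ⟨f a * s, I.mul_mem_left _ _ hs, ?_, by rw [repr_f_mul, coeff_C_mul, mul_comm]⟩
      rw [repr_f_mul]; exact (natDegree_C_mul_le _ _).trans hsn)

theorem mem_leadingCoeffIdeal {I : TwoSidedIdeal S} {n : ℕ} {r : R} :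
    r ∈ h.leadingCoeffIdeal I n ↔ ∃ s ∈ I, (h.repr s).natDegree ≤ n ∧ (h.repr s).coeff n = r :=
  TwoSidedIdeal.mem_mk' ..

theorem delta_mem_leadingCoeffIdeal {I : TwoSidedIdeal S} {n : ℕ} {r : R}
    (hr : r ∈ h.leadingCoeffIdeal I n) : δ r ∈ h.leadingCoeffIdeal I n := by
  obtain ⟨s, hs, hsn, rfl⟩ := h.mem_leadingCoeffIdeal.1 hr
  refine h.mem_leadingCoeffIdeal.2 ⟨x * s - s * x,
    I.sub_mem (I.mul_mem_left _ _ hs) (I.mul_mem_right _ _ hs), ?_,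
    h.coeff_repr_x_mul_sub_mul_x s n⟩
  rw [natDegree_le_iff_coeff_eq_zero] at hsn ⊢
  intro N hN
  rw [h.coeff_repr_x_mul_sub_mul_x, hsn N hN, map_zero]

theorem exists_mem_natDegree_le_coeff_eq_one (hsimple : IsDeltaSimple δ) {I : TwoSidedIdeal S}
    (hI : I ≠ ⊥) : ∃ n, ∃ p ∈ I, (h.repr p).natDegree ≤ n ∧ (h.repr p).coeff n = 1 ∧
      ∀ s ∈ I, (h.repr s).natDegree < n → s = 0 := by
  classical
  have hex : ∃ n, ∃ s ∈ I, s ≠ 0 ∧ (h.repr s).natDegree ≤ n := by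
    by_contra! hI0
    exact hI (le_bot_iff.1 fun s hs => (TwoSidedIdeal.mem_bot _).2 <|
      by_contra fun hs0 => (hI0 _ s hs hs0).false)
  obtain ⟨s, hs, hs0, hsn⟩ := Nat.find_spec hex
  have hmin : ∀ t ∈ I, (h.repr t).natDegree < Nat.find hex → t = 0 := fun t ht htn =>
    by_contra fun ht0 => Nat.find_min hex htn ⟨t, ht, ht0, le_rfl⟩
  have hsn' : (h.repr s).natDegree = Nat.find hex :=
    hsn.antisymm (not_lt.1 fun hlt => hs0 (hmin s hs hlt))
  have hL : h.leadingCoeffIdeal I (Nat.find hex) ≠ ⊥ := fun hbot => by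
    have hlc := h.mem_leadingCoeffIdeal.2 ⟨s, hs, hsn, rfl⟩
    rw [hbot, TwoSidedIdeal.mem_bot _, ← hsn', coeff_natDegree, leadingCoeff_eq_zero,
      h.repr.map_eq_zero_iff] at hlc
    exact hs0 hlc
  have hL1 : (1 : R) ∈ h.leadingCoeffIdeal I (Nat.find hex) := by
    rw [(hsimple _ fun r => h.delta_mem_leadingCoeffIdeal).resolve_left hL]; trivial
  obtain ⟨p, hp, hpn, hp1⟩ := h.mem_leadingCoeffIdeal.1 hL1
  exact ⟨_, p, hp, hpn, hp1, hmin⟩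

theorem isSimpleRing_of_isDeltaSimple (h : IsOreExtension (RingHom.id R) δ f x)
    (hsimple : IsDeltaSimple δ) (hδ : δ ≠ 0)
    (htf : ∀ (n : ℕ) (r : R), 0 < n → n • r = 0 → r = 0) : IsSimpleRing S := by
  obtain ⟨r₀, hr₀⟩ : ∃ r, δ r ≠ 0 := by simpa [DFunLike.ext_iff] using hδ
  have : Nontrivial R := nontrivial_of_ne _ _ hr₀
  have : Nontrivial S := h.repr.symm.injective.nontrivial
  refine .of_eq_bot_or_eq_top fun I => or_iff_not_imp_left.2 fun hI => ?_
  obtain ⟨n, p, hp, hpn, hp1, hmin⟩ := h.exists_mem_natDegree_le_coeff_eq_one hsimple hI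
  cases n with
  | zero =>
    have hp_one : p = 1 :=
      h.repr.injective (by rw [repr_one, eq_C_of_natDegree_le_zero hpn, hp1, C_1])
    rw [← I.one_mem_iff, ← hp_one]
    exact hp
  | succ m =>
    refine absurd (AddMonoidHom.ext fun r => ?_) hδ
    obtain ⟨d, hd, hdeg, hcoeff⟩ := h.exists_mul_f_sub_of_natDegree_le hpn r
    have hd0 : d = 0 := by
      rw [← h.repr_eval₂ d, ← hd, hmin _ (I.sub_mem (I.mul_mem_right _ _ hp)
        (I.mul_mem_left _ _ hp)) (by rw [hd, repr_eval₂]; omega), map_zero]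
    rw [hp1, one_mul, hd0, coeff_zero] at hcoeff
    exact htf _ _ m.succ_pos hcoeff.symm

end CommRing

end IsOreExtension

/-- If `R` is a commutative ring which is torsion-free as a `ℤ`-module, then
`R[x;id,δ]` is simple if and only if `R` is `δ`-simple and `δ` is non-zero. -/
theorem stmt_18 {R S : Type*} [CommRing R] [Ring S] (δ : R → R)
    (hδ : IsSigmaDerivation (RingHom.id R) δ)
    (htf : ∀ (n : ℕ) (r : R), 0 < n → n • r = 0 → r = 0)
    (f : R →+* S) (x : S) (hS : IsOreExtension (RingHom.id R) δ f x) :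
    IsSimpleRing S ↔ IsDeltaSimple δ ∧ δ ≠ 0 := by
  let δ' : R →+ R := AddMonoidHom.mk' δ hδ.1
  have h : IsOreExtension (RingHom.id R) δ' f x := hS
  have hδ' : δ' ≠ 0 ↔ δ ≠ 0 := DFunLike.coe_injective.ne_iff.symm
  exact ⟨fun _ => ⟨h.isDeltaSimple_of_isSimpleRing, hδ'.1 h.ne_zero_of_isSimpleRing⟩,
    fun ⟨hsimple, hne⟩ => h.isSimpleRing_of_isDeltaSimple hsimple (hδ'.2 hne) htf⟩
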